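/- Let f : [0,1]^d → ℝ be continuous, δ ∈ (0,1), N a positive integer, p ∈ [1,∞). Then there exist a₁,...,a_N ∈ [0,2/9) such that ∫_{[0,1]^d} |φ(x) − f(x)|^p dx ≤ (2ω_f(√d)2^{-N} + ω_f(√d·2^{-N}))^p + 2^p d δ (|f(0)| + ω_f(√d))^p, where φ(x) = 2ω_f(√d)Σ_{j=1}^N 2^{-j} ϱ₃( a_j · 3^{1 + Σ_{i=1}^d 2^{(i−1)N} ϱ_{1,δ}(2^N x_i)} ) + f(0) − ω_f(√d). -/

import Mathlib

open MeasureTheory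

/-- ϱ_{1,δ}: the continuous piecewise linear approximation of the floor function. -/
noncomputable def rho1 (δ x : ℝ) : ℝ :=
  if Int.fract x ≤ 1 - δ then ⌊x⌋ else ⌊x⌋ + (Int.fract x - (1 - δ)) / δ

/-- T̃(t) = 0 for t > cos(4π/9), 1 − t/cos(4π/9) for 0 ≤ t ≤ cos(4π/9), 1 for t < 0. -/
noncomputable def Ttilde (t : ℝ) : ℝ :=
  if t > Real.cos (4 * Real.pi / 9) then 0
  else if 0 ≤ t then 1 - t / Real.cos (4 * Real.pi / 9)
  else 1

/-- ϱ₃(x) = T̃(cos(2πx)). -/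
noncomputable def rho3 (x : ℝ) : ℝ := Ttilde (Real.cos (2 * Real.pi * x))

/-- The unit cube [0,1]^d in Euclidean space. -/
def unitCube (d : ℕ) : Set (EuclideanSpace ℝ (Fin d)) := {x | ∀ i, x i ∈ Set.Icc (0:ℝ) 1}

/-- Modulus of continuity of f on [0,1]^d with respect to the Euclidean norm. -/
noncomputable def modCont (d : ℕ) (f : EuclideanSpace ℝ (Fin d) → ℝ) (r : ℝ) : ℝ :=
  sSup {t | ∃ x ∈ unitCube d, ∃ y ∈ unitCube d, ‖x - y‖ ≤ r ∧ t = |f x - f y|}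

/-
Split `[0,1]^d` into the `2^{Nd}` dyadic cells of side `2^{-N}` and give the cell with corner
`k / 2^N` the index `m = ∑ᵢ kᵢ 2^{Ni}`. If no coordinate of `x` lies within `δ 2^{-N}` of the right
end of its cell (this fails only on a set of measure at most `dδ`), then `ϱ_{1,δ}(2^N xᵢ) = kᵢ`
and the exponent is `m + 1`. Round the value of `f` at each corner to `N` binary digits
`b_{m,1}, …, b_{m,N}` and store digit `j` of every cell in the ternary expansion
`a_j = ∑_m b_{m,j} 3^{-(m+2)}`. Multiplying by `3^{m+1}` leaves, modulo an integer,
`b_{m,j}/3` plus a tail in `[0, 1/6]`, and `ϱ₃` (which is `1`-periodic, vanishes on `(-2/9, 2/9)`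
and equals `1` on `[1/4, 3/4]`) reads off `b_{m,j}`. So on good points `φ(x)` is the rounded
value at the corner of the cell of `x`, within `2ω(√d)2^{-N} + ω(√d 2^{-N})` of `f(x)`;
elsewhere `|φ - f| ≤ 2ω(√d)` since both lie in `[f(0) - ω(√d), f(0) + ω(√d)]`.
-/

open Finset

lemma cos_four_pi_div_nine_pos : 0 < Real.cos (4 * Real.pi / 9) :=
  Real.cos_pos_of_mem_Ioo ⟨by linarith [Real.pi_pos], by linarith [Real.pi_pos]⟩

lemma Ttilde_mem_Icc (t : ℝ) : Ttilde t ∈ Set.Icc (0 : ℝ) 1 := by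
  have hc := cos_four_pi_div_nine_pos
  unfold Ttilde
  split_ifs with h₁ h₂
  · simp
  · constructor
    · linarith [div_le_one_of_le₀ (not_lt.mp h₁) hc.le]
    · linarith [div_nonneg h₂ hc.le]
  · simp

lemma Ttilde_of_nonpos {t : ℝ} (ht : t ≤ 0) : Ttilde t = 1 := by
  have hc := cos_four_pi_div_nine_pos
  unfold Ttilde
  rw [if_neg (by linarith)]
  split_ifs with h
  · rw [le_antisymm ht h, zero_div, sub_zero]
  · rfl

lemma rho3_mem_Icc (x : ℝ) : rho3 x ∈ Set.Icc (0 : ℝ) 1 := Ttilde_mem_Icc _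

lemma rho3_periodic : Function.Periodic rho3 1 := fun x => by
  simp only [rho3, mul_add, mul_one, Real.cos_add_two_pi]

lemma rho3_nat_add (n : ℕ) (u : ℝ) : rho3 (n + u) = rho3 u := by
  simpa [add_comm] using rho3_periodic.nat_mul n u

lemma rho3_eq_zero_of_abs_lt {u : ℝ} (hu : |u| < 2 / 9) : rho3 u = 0 := by
  have hcos : Real.cos (4 * Real.pi / 9) < Real.cos (2 * Real.pi * u) := by
    rw [← Real.cos_abs (2 * Real.pi * u)]
    apply Real.cos_lt_cos_of_nonneg_of_le_pi (abs_nonneg _) (by linarith [Real.pi_pos])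
    rw [abs_mul, abs_of_pos Real.two_pi_pos]
    nlinarith [Real.pi_pos]
  simp only [rho3, Ttilde, if_pos hcos]

lemma rho3_eq_one_of_mem_Icc {u : ℝ} (hu : u ∈ Set.Icc (1 / 4 : ℝ) (3 / 4)) : rho3 u = 1 :=
  Ttilde_of_nonpos <| Real.cos_nonpos_of_pi_div_two_le_of_le
    (by nlinarith [Real.pi_pos, hu.1]) (by nlinarith [Real.pi_pos, hu.2])

noncomputable def ternary (M : ℕ) (β : ℕ → ℕ) : ℝ := ∑ m ∈ range M, (β m : ℝ) / 3 ^ (m + 2)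

lemma ternary_nonneg (M : ℕ) (β : ℕ → ℕ) : 0 ≤ ternary M β :=
  sum_nonneg fun _ _ => by positivity

lemma ternary_le {β : ℕ → ℕ} (hβ : ∀ m, β m ≤ 1) (M : ℕ) : ternary M β ≤ 1 / 6 :=
  calc ternary M β ≤ ∑ m ∈ Ico 0 M, (1 / 9 : ℝ) * (1 / 3) ^ m := by
        rw [ternary, Finset.range_eq_Ico]
        refine sum_le_sum fun m _ => ?_
        rw [div_le_iff₀ (by positivity)]
        have hweight : (1 / 9 : ℝ) * (1 / 3) ^ m * 3 ^ (m + 2) = 1 := by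
          rw [pow_add, div_pow, one_pow]
          field_simp
          norm_num
        rw [hweight]
        exact_mod_cast hβ m
    _ ≤ 1 / 9 * ((1 / 3) ^ 0 / (1 - 1 / 3)) := by
        rw [← mul_sum]
        exact mul_le_mul_of_nonneg_left (geom_sum_Ico_le_of_lt_one (by norm_num) (by norm_num))
          (by norm_num)
    _ = 1 / 6 := by norm_num

lemma ternary_mul_three_pow (β : ℕ → ℕ) {M m₀ : ℕ} (hm₀ : m₀ < M) :
    ternary M β * 3 ^ (m₀ + 1)
      = ((∑ m ∈ range m₀, β m * 3 ^ (m₀ + 1 - (m + 2)) : ℕ) : ℝ)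
        + ((β m₀ : ℝ) / 3 + ternary (M - (m₀ + 1)) (fun k => β (m₀ + 1 + k))) := by
  rw [ternary, ternary, sum_mul, ← sum_range_add_sum_Ico _ (Nat.succ_le_of_lt hm₀), sum_range_succ,
    sum_Ico_eq_sum_range, add_assoc]
  push_cast
  congr 1
  · refine sum_congr rfl fun m hm => ?_
    rw [pow_sub₀ _ three_ne_zero (by rw [mem_range] at hm; omega)]
    ring
  congr 1
  · rw [pow_succ _ (m₀ + 1)]
    field_simp
  · refine sum_congr rfl fun k _ => ?_
    rw [show m₀ + 1 + k + 2 = (k + 2) + (m₀ + 1) by ring, pow_add]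
    field_simp

lemma rho3_ternary_mul_three_pow {β : ℕ → ℕ} (hβ : ∀ m, β m ≤ 1) {M m₀ : ℕ} (hm₀ : m₀ < M) :
    rho3 (ternary M β * 3 ^ (m₀ + 1)) = β m₀ := by
  set T := ternary (M - (m₀ + 1)) (fun k => β (m₀ + 1 + k))
  have hT₀ : 0 ≤ T := ternary_nonneg _ _
  have hT₁ : T ≤ 1 / 6 := ternary_le (fun k => hβ _) _
  rw [ternary_mul_three_pow β hm₀, rho3_nat_add]
  rcases Nat.le_one_iff_eq_zero_or_eq_one.mp (hβ m₀) with h | h <;> rw [h] <;> push_cast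
  · exact rho3_eq_zero_of_abs_lt (by rw [abs_lt]; constructor <;> linarith)
  · exact rho3_eq_one_of_mem_Icc ⟨by linarith, by linarith⟩

noncomputable def dyadicSum (N : ℕ) (v : ℕ → ℝ) : ℝ := ∑ j ∈ Icc 1 N, (2 : ℝ) ^ (-(j : ℤ)) * v j

lemma dyadicSum_mem_Icc {v : ℕ → ℝ} (hv : ∀ j, v j ∈ Set.Icc (0 : ℝ) 1) (N : ℕ) :
    dyadicSum N v ∈ Set.Icc (0 : ℝ) 1 := by
  refine ⟨sum_nonneg fun j _ => mul_nonneg (by positivity) (hv j).1, ?_⟩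
  calc dyadicSum N v ≤ ∑ j ∈ Ico 1 (N + 1), (1 / 2 : ℝ) ^ j := by
        refine sum_le_sum fun j _ => ?_
        rw [zpow_neg, zpow_natCast, one_div, inv_pow]
        exact mul_le_of_le_one_right (by positivity) (hv j).2
    _ ≤ (1 / 2) ^ 1 / (1 - 1 / 2) := geom_sum_Ico_le_of_lt_one (by norm_num) (by norm_num)
    _ = 1 := by norm_num

lemma dyadicSum_binaryDigits {n N : ℕ} (hn : n < 2 ^ N) :
    dyadicSum N (fun j => ((n / 2 ^ (N - j) % 2 : ℕ) : ℝ)) = n / 2 ^ N := by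
  set u : ℕ → ℝ := fun j => ((n / 2 ^ (N - j) : ℕ) : ℝ) / 2 ^ j
  have hstep : ∀ i ∈ range N,
      (2 : ℝ) ^ (-((i + 1 : ℕ) : ℤ)) * ((n / 2 ^ (N - (i + 1)) % 2 : ℕ) : ℝ) = u (i + 1) - u i := by
    intro i hi
    have hshift : n / 2 ^ (N - i) = n / 2 ^ (N - (i + 1)) / 2 := by
      rw [Nat.div_div_eq_div_mul, ← pow_succ]
      congr 2
      rw [mem_range] at hi
      omega
    have hdigit : ((n / 2 ^ (N - (i + 1)) : ℕ) : ℝ)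
        = ((n / 2 ^ (N - (i + 1)) % 2 : ℕ) : ℝ) + 2 * ((n / 2 ^ (N - (i + 1)) / 2 : ℕ) : ℝ) := by
      exact_mod_cast (Nat.mod_add_div _ 2).symm
    simp only [u, hshift, zpow_neg, zpow_natCast]
    rw [hdigit, pow_succ]
    field_simp
    ring
  have hu₀ : u 0 = 0 := by simp [u, Nat.div_eq_of_lt hn]
  rw [dyadicSum, show Icc 1 N = Ico (0 + 1) (N + 1) from rfl, ← sum_Ico_add', ← range_eq_Ico,
    sum_congr rfl hstep, sum_range_sub, hu₀]
  simp [u]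

lemma exists_bits_abs_dyadicSum_sub_le {t : ℝ} (ht : t ∈ Set.Icc (0 : ℝ) 1) (N : ℕ) :
    ∃ β : ℕ → ℕ, (∀ j, β j ≤ 1) ∧ |dyadicSum N (fun j => β j) - t| ≤ 2 ^ (-(N : ℤ)) := by
  set n := min ⌊2 ^ N * t⌋₊ (2 ^ N - 1)
  have hn : n < 2 ^ N := (min_le_right _ _).trans_lt (Nat.sub_lt (by positivity) one_pos)
  have hlow : (n : ℝ) ≤ 2 ^ N * t :=
    (Nat.cast_le.mpr (min_le_left _ _)).trans (Nat.floor_le (by have := ht.1; positivity))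
  have hhigh : 2 ^ N * t ≤ n + 1 := by
    rw [← sub_le_iff_le_add, Nat.cast_min, le_min_iff, Nat.cast_sub Nat.one_le_two_pow]
    push_cast
    exact ⟨by linarith [Nat.lt_floor_add_one (2 ^ N * t)],
      by linarith [mul_le_of_le_one_right (pow_pos (two_pos (α := ℝ)) N).le ht.2]⟩
  refine ⟨fun j => n / 2 ^ (N - j) % 2, fun j => Nat.le_of_lt_succ (Nat.mod_lt _ two_pos), ?_⟩
  have h2N : (0 : ℝ) < 2 ^ N := by positivity
  rw [dyadicSum_binaryDigits hn, zpow_neg, zpow_natCast, inv_eq_one_div,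
    show (n : ℝ) / 2 ^ N - t = (n - 2 ^ N * t) / 2 ^ N by field_simp, abs_div, abs_of_pos h2N]
  exact div_le_div_of_nonneg_right (abs_le.mpr ⟨by linarith, by linarith⟩) h2N.le

lemma exists_bits_affine_approx {ω c y : ℝ} (hy : |y - c| ≤ ω) (N : ℕ) :
    ∃ β : ℕ → ℕ, (∀ j, β j ≤ 1) ∧
      |2 * ω * dyadicSum N (fun j => β j) + c - ω - y| ≤ 2 * ω * 2 ^ (-(N : ℤ)) := by
  rcases ((abs_nonneg _).trans hy).eq_or_lt with hω | hω
  · subst hω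
    exact ⟨0, fun _ => zero_le_one, by simp [sub_eq_zero.mp (abs_nonpos_iff.mp hy)]⟩
  · set t := (y - c + ω) / (2 * ω)
    have ht : t ∈ Set.Icc (0 : ℝ) 1 := by
      have := abs_le.mp hy
      exact ⟨div_nonneg (by linarith) (by linarith), div_le_one_of_le₀ (by linarith) (by linarith)⟩
    obtain ⟨β, hβ, happrox⟩ := exists_bits_abs_dyadicSum_sub_le ht N
    refine ⟨β, hβ, ?_⟩
    have hy_eq : y = 2 * ω * t + c - ω := by simp only [t]; field_simp; ring
    rw [hy_eq, show ∀ S : ℝ, 2 * ω * S + c - ω - (2 * ω * t + c - ω) = 2 * ω * (S - t) by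
      intro S; ring, abs_mul, abs_of_pos (by positivity)]
    exact mul_le_mul_of_nonneg_left happrox (by positivity)

section Cube

variable {d : ℕ}

lemma zero_mem_unitCube : (0 : EuclideanSpace ℝ (Fin d)) ∈ unitCube d := fun _ => by simp

lemma isCompact_unitCube : IsCompact (unitCube d) := by
  have hpre : unitCube d
      = (EuclideanSpace.equiv (Fin d) ℝ).toHomeomorph ⁻¹' Set.univ.pi fun _ => Set.Icc 0 1 :=
    Set.ext fun _ => Set.mem_univ_pi.symm
  rw [hpre, Homeomorph.isCompact_preimage]
  exact isCompact_univ_pi fun _ => isCompact_Icc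

lemma norm_sub_le_sqrt_mul {x y : EuclideanSpace ℝ (Fin d)} {r : ℝ} (hr : 0 ≤ r)
    (h : ∀ i, |x i - y i| ≤ r) : ‖x - y‖ ≤ Real.sqrt d * r := by
  rw [EuclideanSpace.norm_eq, ← Real.sqrt_sq hr, ← Real.sqrt_mul (Nat.cast_nonneg d)]
  refine Real.sqrt_le_sqrt ?_
  calc ∑ i, ‖(x - y) i‖ ^ 2 ≤ ∑ _i : Fin d, r ^ 2 :=
        sum_le_sum fun i _ => by
          rw [PiLp.sub_apply, Real.norm_eq_abs]
          exact pow_le_pow_left₀ (abs_nonneg _) (h i) 2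
    _ = d * r ^ 2 := by simp

lemma norm_sub_le_sqrt_of_mem_unitCube {x y : EuclideanSpace ℝ (Fin d)}
    (hx : x ∈ unitCube d) (hy : y ∈ unitCube d) : ‖x - y‖ ≤ Real.sqrt d := by
  simpa using norm_sub_le_sqrt_mul zero_le_one fun i =>
    abs_sub_le_iff.mpr ⟨by linarith [(hx i).2, (hy i).1], by linarith [(hx i).1, (hy i).2]⟩

variable {f : EuclideanSpace ℝ (Fin d) → ℝ}

lemma abs_sub_le_modCont (hf : ContinuousOn f (unitCube d)) {x y : EuclideanSpace ℝ (Fin d)}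
    {r : ℝ} (hx : x ∈ unitCube d) (hy : y ∈ unitCube d) (hxy : ‖x - y‖ ≤ r) :
    |f x - f y| ≤ modCont d f r := by
  obtain ⟨C, hC⟩ := isCompact_unitCube.exists_bound_of_continuousOn hf
  refine le_csSup ⟨2 * C, ?_⟩ ⟨x, hx, y, hy, hxy, rfl⟩
  rintro t ⟨x, hx, y, hy, -, rfl⟩
  linarith [abs_sub (f x) (f y), Real.norm_eq_abs (f x) ▸ hC x hx, Real.norm_eq_abs (f y) ▸ hC y hy]

lemma modCont_nonneg (hf : ContinuousOn f (unitCube d)) {r : ℝ} (hr : 0 ≤ r) :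
    0 ≤ modCont d f r :=
  (abs_nonneg _).trans <| abs_sub_le_modCont hf zero_mem_unitCube zero_mem_unitCube (by simpa)

end Cube

section Volume

variable {d : ℕ}

lemma volume_setOf_forall_apply_mem (s : Fin d → Set ℝ) :
    volume {x : EuclideanSpace ℝ (Fin d) | ∀ i, x i ∈ s i} = ∏ i, volume (s i) := by
  rw [← volume_pi_pi,
    ← (EuclideanSpace.volume_preserving_symm_measurableEquiv_toLp (Fin d)).measure_preimage_equiv]
  exact congrArg volume (Set.ext fun x => Set.mem_univ_pi.symm)

lemma volume_unitCube : volume (unitCube d) = 1 :=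
  (volume_setOf_forall_apply_mem fun _ => Set.Icc 0 1).trans (by simp)

lemma volume_unitCube_inter_setOf_apply_mem_le (i : Fin d) (S : Set ℝ) :
    volume (unitCube d ∩ {x | x i ∈ S}) ≤ volume (Set.Icc 0 1 ∩ S) := by
  classical
  calc volume (unitCube d ∩ {x | x i ∈ S})
      ≤ volume {x : EuclideanSpace ℝ (Fin d) |
          ∀ j, x j ∈ Function.update (fun _ => Set.Icc 0 1) i (Set.Icc 0 1 ∩ S) j} := by
        refine measure_mono fun x ⟨hx, hxS⟩ j => ?_
        rcases eq_or_ne j i with rfl | hj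
        · simpa using ⟨hx j, hxS⟩
        · simpa [hj] using hx j
    _ = volume (Set.Icc 0 1 ∩ S) := by
        rw [volume_setOf_forall_apply_mem, Fintype.prod_eq_single i fun j hj => by simp [hj]]
        simp

lemma volume_unitCube_inter_exists_apply_mem_le (S : Set ℝ) :
    volume (unitCube d ∩ {x | ∃ i, x i ∈ S}) ≤ d * volume (Set.Icc 0 1 ∩ S) := by
  have hunion : unitCube d ∩ {x | ∃ i, x i ∈ S} = ⋃ i, unitCube d ∩ {x | x i ∈ S} := by
    ext x
    simp only [Set.mem_inter_iff, Set.mem_ofPred_eq, Set.mem_iUnion, exists_and_left]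
  calc volume (unitCube d ∩ {x | ∃ i, x i ∈ S})
      ≤ ∑ i, volume (unitCube d ∩ {x | x i ∈ S}) := hunion ▸ measure_iUnion_fintype_le _ _
    _ ≤ ∑ _i : Fin d, volume (Set.Icc 0 1 ∩ S) :=
        sum_le_sum fun i _ => volume_unitCube_inter_setOf_apply_mem_le i S
    _ = d * volume (Set.Icc 0 1 ∩ S) := by simp

end Volume

/-- Off this set, `rho1 δ (2 ^ N * t)` is an integer `k < 2 ^ N` with `k ≤ 2 ^ N * t`. -/
def dyadicEdge (N : ℕ) (δ : ℝ) : Set ℝ :=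
  {t | ∀ k : Fin (2 ^ N), 2 ^ N * t ∉ Set.Icc (k : ℝ) (k + 1 - δ)}

lemma measurableSet_dyadicEdge (N : ℕ) (δ : ℝ) : MeasurableSet (dyadicEdge N δ) := by
  simp only [dyadicEdge, Set.ofPred_forall]
  exact MeasurableSet.iInter fun k => (measurableSet_Icc.preimage (measurable_const_mul _)).compl

lemma Icc_inter_dyadicEdge_subset {δ : ℝ} (hδ : δ ≤ 1) (N : ℕ) :
    Set.Icc 0 1 ∩ dyadicEdge N δ
      ⊆ ⋃ k : Fin (2 ^ N), Set.Ioc (((k : ℝ) + 1 - δ) / 2 ^ N) (((k : ℝ) + 1) / 2 ^ N) := by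
  rintro t ⟨⟨ht₀, ht₁⟩, hedge⟩
  have h2N : (0 : ℝ) < 2 ^ N := by positivity
  set s := 2 ^ N * t with hs_def
  have hs : 0 < s := by
    by_contra! h
    exact hedge ⟨0, by positivity⟩ ⟨by simp [ht₀], by simp; linarith⟩
  have hc₁ : 1 ≤ ⌈s⌉₊ := Nat.one_le_iff_ne_zero.mpr (Nat.ceil_pos.mpr hs).ne'
  have hcN : ⌈s⌉₊ ≤ 2 ^ N := Nat.ceil_le.mpr (by push_cast; nlinarith)
  set k : Fin (2 ^ N) := ⟨⌈s⌉₊ - 1, by omega⟩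
  have hk : (k : ℝ) = ⌈s⌉₊ - 1 := by simp [k, Nat.cast_sub hc₁]
  have hks : (k : ℝ) ≤ s := by linarith [Nat.ceil_lt_add_one hs.le]
  have hδs : k + 1 - δ < s := by
    by_contra! h
    exact hedge k ⟨hks, h⟩
  refine Set.mem_iUnion.mpr ⟨k, ?_, ?_⟩
  · rw [div_lt_iff₀ h2N, mul_comm]
    exact hδs
  · rw [le_div_iff₀ h2N, mul_comm]
    linarith [Nat.le_ceil s]

lemma volume_Icc_inter_dyadicEdge_le {δ : ℝ} (hδ : δ ≤ 1) (N : ℕ) :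
    volume (Set.Icc 0 1 ∩ dyadicEdge N δ) ≤ ENNReal.ofReal δ := by
  have hlen : ∀ k : Fin (2 ^ N), ((k : ℝ) + 1) / 2 ^ N - ((k : ℝ) + 1 - δ) / 2 ^ N = δ / 2 ^ N :=
    fun k => by ring
  calc volume (Set.Icc 0 1 ∩ dyadicEdge N δ)
      ≤ ∑ k : Fin (2 ^ N), volume (Set.Ioc (((k : ℝ) + 1 - δ) / 2 ^ N) (((k : ℝ) + 1) / 2 ^ N)) :=
        (measure_mono (Icc_inter_dyadicEdge_subset hδ N)).trans (measure_iUnion_fintype_le _ _)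
    _ = ENNReal.ofReal δ := by
        simp_rw [Real.volume_Ioc, hlen, sum_const, card_univ, Fintype.card_fin, nsmul_eq_mul]
        rw [← ENNReal.ofReal_natCast, ← ENNReal.ofReal_mul (by positivity)]
        push_cast
        rw [mul_div_cancel₀ _ (by positivity)]

lemma measurableSet_setOf_exists_apply_mem_dyadicEdge (d N : ℕ) (δ : ℝ) :
    MeasurableSet {x : EuclideanSpace ℝ (Fin d) | ∃ i, x i ∈ dyadicEdge N δ} := by
  simp only [Set.ofPred_exists]
  exact MeasurableSet.iUnion fun i =>
    (measurableSet_dyadicEdge N δ).preimage (EuclideanSpace.proj i).continuous.measurable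

lemma setIntegral_le_of_le_off {α : Type*} [MeasurableSpace α] {μ : Measure α} {s B : Set α}
    {g : α → ℝ} {C₁ C₂ : ℝ} (hs : MeasurableSet s) (hμs : μ s ≠ ⊤) (hB : MeasurableSet B)
    (hC₁ : 0 ≤ C₁) (hg₀ : ∀ x ∈ s, 0 ≤ g x) (hg₁ : ∀ x ∈ s, x ∉ B → g x ≤ C₁)
    (hg₂ : ∀ x ∈ s, g x ≤ C₂) :
    ∫ x in s, g x ∂μ ≤ C₁ * μ.real s + C₂ * μ.real (s ∩ B) := by
  have : IsFiniteMeasure (μ.restrict s) := isFiniteMeasure_restrict.mpr hμs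
  have hbound : ∀ x ∈ s, g x ≤ C₁ + B.indicator (fun _ => C₂) x := fun x hx => by
    by_cases hxB : x ∈ B
    · rw [Set.indicator_of_mem hxB]
      linarith [hg₂ x hx]
    · rw [Set.indicator_of_notMem hxB, add_zero]
      exact hg₁ x hx hxB
  calc ∫ x in s, g x ∂μ ≤ ∫ x in s, (C₁ + B.indicator (fun _ => C₂) x) ∂μ :=
        integral_mono_of_nonneg (ae_restrict_of_forall_mem hs hg₀)
          ((integrable_const C₁).add ((integrable_const C₂).indicator hB))
          (ae_restrict_of_forall_mem hs hbound)
    _ = C₁ * μ.real s + C₂ * μ.real (s ∩ B) := by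
        rw [integral_add (integrable_const C₁) ((integrable_const C₂).indicator hB),
          setIntegral_indicator hB, setIntegral_const, setIntegral_const, smul_eq_mul,
          smul_eq_mul, mul_comm, mul_comm (μ.real _)]

lemma rho1_eq_of_mem_Icc {δ t : ℝ} (hδ : 0 < δ) {n : ℤ} (ht : t ∈ Set.Icc (n : ℝ) (n + 1 - δ)) :
    rho1 δ t = n := by
  have hfloor : ⌊t⌋ = n := Int.floor_eq_iff.mpr ⟨ht.1, by linarith [ht.2]⟩
  rw [rho1, if_pos (by rw [← Int.self_sub_floor, hfloor]; linarith [ht.2]), hfloor]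

section Network

variable {d N : ℕ}

noncomputable def cellExponent (N : ℕ) (δ : ℝ) (x : EuclideanSpace ℝ (Fin d)) : ℝ :=
  1 + ∑ i : Fin d, (2 : ℝ) ^ ((i : ℕ) * N) * rho1 δ ((2 : ℝ) ^ N * x i)

noncomputable def phi (ω c : ℝ) (N : ℕ) (δ : ℝ) (a : ℕ → ℝ) (x : EuclideanSpace ℝ (Fin d)) : ℝ :=
  2 * ω * dyadicSum N (fun j => rho3 (a j * 3 ^ cellExponent N δ x)) + c - ω

/-- The corner `(k₀ / 2 ^ N, …, k_{d-1} / 2 ^ N)` of the dyadic cell with index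
`m = ∑ kᵢ (2 ^ N) ^ i`. -/
noncomputable def cellCorner (d N m : ℕ) : EuclideanSpace ℝ (Fin d) :=
  WithLp.toLp 2 fun i => ((m / (2 ^ N) ^ (i : ℕ) % 2 ^ N : ℕ) : ℝ) / 2 ^ N

lemma cellCorner_mem_unitCube (d N m : ℕ) : cellCorner d N m ∈ unitCube d := fun i => by
  rw [cellCorner, PiLp.toLp_apply]
  have hdigit : ((m / (2 ^ N) ^ (i : ℕ) % 2 ^ N : ℕ) : ℝ) ≤ 2 ^ N := by
    exact_mod_cast (Nat.mod_lt _ (Nat.two_pow_pos N)).le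
  exact ⟨by positivity, div_le_one_of_le₀ hdigit (by positivity)⟩

lemma cellCorner_finFunctionFinEquiv_apply (k : Fin d → Fin (2 ^ N)) (i : Fin d) :
    cellCorner d N (finFunctionFinEquiv k) i = (k i : ℝ) / 2 ^ N := by
  rw [cellCorner, PiLp.toLp_apply, ← finFunctionFinEquiv_symm_apply_val, Equiv.symm_apply_apply]

lemma norm_cellCorner_sub_le {x : EuclideanSpace ℝ (Fin d)} (k : Fin d → Fin (2 ^ N))
    (hk : ∀ i, 2 ^ N * x i ∈ Set.Icc (k i : ℝ) (k i + 1)) :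
    ‖cellCorner d N (finFunctionFinEquiv k) - x‖ ≤ Real.sqrt d * 2 ^ (-(N : ℤ)) := by
  refine norm_sub_le_sqrt_mul (by positivity) fun i => ?_
  have h2N : (0 : ℝ) < 2 ^ N := by positivity
  rw [cellCorner_finFunctionFinEquiv_apply, zpow_neg, zpow_natCast,
    show (k i : ℝ) / 2 ^ N - x i = (k i - 2 ^ N * x i) / 2 ^ N by field_simp, abs_div,
    abs_of_pos h2N, inv_eq_one_div]
  exact div_le_div_of_nonneg_right (abs_le.mpr ⟨by linarith [(hk i).2], by linarith [(hk i).1]⟩)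
    h2N.le

lemma cellExponent_eq_of_mem_cell {δ : ℝ} (hδ : 0 < δ) {x : EuclideanSpace ℝ (Fin d)}
    (k : Fin d → Fin (2 ^ N)) (hk : ∀ i, 2 ^ N * x i ∈ Set.Icc (k i : ℝ) (k i + 1 - δ)) :
    cellExponent N δ x = ((finFunctionFinEquiv k : ℕ) + 1 : ℕ) := by
  rw [cellExponent, finFunctionFinEquiv_apply, add_comm]
  push_cast
  congr 1
  refine sum_congr rfl fun i _ => ?_
  rw [rho1_eq_of_mem_Icc hδ (n := (k i : ℕ)) (by push_cast; exact hk i), pow_mul', mul_comm]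
  push_cast
  rfl

lemma phi_eq_of_mem_cell {δ : ℝ} (hδ : 0 < δ) {b : ℕ → ℕ → ℕ} (hb : ∀ m j, b m j ≤ 1) (ω c : ℝ)
    {x : EuclideanSpace ℝ (Fin d)} (k : Fin d → Fin (2 ^ N))
    (hk : ∀ i, 2 ^ N * x i ∈ Set.Icc (k i : ℝ) (k i + 1 - δ)) :
    phi ω c N δ (fun j => ternary ((2 ^ N) ^ d) fun m => b m j) x
      = 2 * ω * dyadicSum N (fun j => b (finFunctionFinEquiv k) j) + c - ω := by
  simp only [phi, cellExponent_eq_of_mem_cell hδ k hk, Real.rpow_natCast,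
    rho3_ternary_mul_three_pow (fun m => hb m _) (finFunctionFinEquiv k).isLt]

end Network

section Bounds

variable {d N : ℕ} {f : EuclideanSpace ℝ (Fin d) → ℝ} {δ : ℝ}

lemma abs_phi_sub_le (hf : ContinuousOn f (unitCube d)) (a : ℕ → ℝ)
    {x : EuclideanSpace ℝ (Fin d)} (hx : x ∈ unitCube d) :
    |phi (modCont d f (Real.sqrt d)) (f 0) N δ a x - f x|
      ≤ 2 * (|f 0| + modCont d f (Real.sqrt d)) := by
  set ω := modCont d f (Real.sqrt d)
  set S := dyadicSum N (fun j => rho3 (a j * 3 ^ cellExponent N δ x))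
  have hω : 0 ≤ ω := modCont_nonneg hf (Real.sqrt_nonneg _)
  have hS : S ∈ Set.Icc (0 : ℝ) 1 := dyadicSum_mem_Icc (fun j => rho3_mem_Icc _) N
  have hfx := abs_le.mp <| abs_sub_le_modCont hf hx zero_mem_unitCube
    (norm_sub_le_sqrt_of_mem_unitCube hx zero_mem_unitCube)
  rw [phi, abs_le]
  constructor <;>
    linarith [abs_nonneg (f 0), mul_nonneg hω hS.1, mul_le_of_le_one_right hω hS.2]

lemma abs_phi_sub_le_of_notMem_dyadicEdge (hf : ContinuousOn f (unitCube d)) (hδ : 0 < δ)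
    {b : ℕ → ℕ → ℕ} (hb : ∀ m j, b m j ≤ 1)
    (hbf : ∀ m, |2 * modCont d f (Real.sqrt d) * dyadicSum N (fun j => b m j) + f 0
      - modCont d f (Real.sqrt d) - f (cellCorner d N m)|
        ≤ 2 * modCont d f (Real.sqrt d) * 2 ^ (-(N : ℤ)))
    {x : EuclideanSpace ℝ (Fin d)} (hx : x ∈ unitCube d) (hxB : ∀ i, x i ∉ dyadicEdge N δ) :
    |phi (modCont d f (Real.sqrt d)) (f 0) N δ (fun j => ternary ((2 ^ N) ^ d) fun m => b m j) x
        - f x|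
      ≤ 2 * modCont d f (Real.sqrt d) * 2 ^ (-(N : ℤ))
        + modCont d f (Real.sqrt d * 2 ^ (-(N : ℤ))) := by
  choose k hk using fun i => by simpa [dyadicEdge] using hxB i
  have hcorner := norm_cellCorner_sub_le k fun i => Set.Icc_subset_Icc_right (by linarith) (hk i)
  rw [phi_eq_of_mem_cell hδ hb _ _ k hk]
  exact (abs_sub_le _ (f (cellCorner d N (finFunctionFinEquiv k))) _).trans <|
    add_le_add (hbf _) (abs_sub_le_modCont hf (cellCorner_mem_unitCube d N _) hx hcorner)

lemma measureReal_unitCube_inter_dyadicEdge_le (hδ₀ : 0 ≤ δ) (hδ₁ : δ ≤ 1) :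
    volume.real (unitCube d ∩ {x | ∃ i, x i ∈ dyadicEdge N δ}) ≤ d * δ := by
  refine ENNReal.toReal_le_of_le_ofReal (by positivity) ?_
  calc volume (unitCube d ∩ {x | ∃ i, x i ∈ dyadicEdge N δ})
      ≤ d * volume (Set.Icc 0 1 ∩ dyadicEdge N δ) := volume_unitCube_inter_exists_apply_mem_le _
    _ ≤ d * ENNReal.ofReal δ := by gcongr; exact volume_Icc_inter_dyadicEdge_le hδ₁ N
    _ = ENNReal.ofReal (d * δ) := by
        rw [ENNReal.ofReal_mul (Nat.cast_nonneg d), ENNReal.ofReal_natCast]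

end Bounds

theorem stmt16_general (d : ℕ) (f : EuclideanSpace ℝ (Fin d) → ℝ)
    (hf : ContinuousOn f (unitCube d)) (δ : ℝ) (hδ : δ ∈ Set.Ioo (0:ℝ) 1)
    (N : ℕ) (p : ℝ) (hp : 1 ≤ p) :
    ∃ a : ℕ → ℝ, (∀ j, a j ∈ Set.Ico (0:ℝ) (2/9)) ∧
      (∫ x in unitCube d,
          |(2 * modCont d f (Real.sqrt d) *
              ∑ j ∈ Finset.Icc 1 N, (2:ℝ) ^ (-(j:ℤ)) *
                rho3 (a j * (3:ℝ) ^
                  ((1 + ∑ i : Fin d, (2:ℝ) ^ ((i:ℕ) * N) * rho1 δ ((2:ℝ) ^ N * x i) : ℝ)))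
            + f 0 - modCont d f (Real.sqrt d)) - f x| ^ p)
      ≤ (2 * modCont d f (Real.sqrt d) * (2:ℝ) ^ (-(N:ℤ))
            + modCont d f (Real.sqrt d * (2:ℝ) ^ (-(N:ℤ)))) ^ p
        + 2 ^ p * d * δ * (|f 0| + modCont d f (Real.sqrt d)) ^ p := by
  choose b hb hbf using fun m => exists_bits_affine_approx (abs_sub_le_modCont hf
    (cellCorner_mem_unitCube d N m) zero_mem_unitCube
    (norm_sub_le_sqrt_of_mem_unitCube (cellCorner_mem_unitCube d N m) zero_mem_unitCube)) N
  set a : ℕ → ℝ := fun j => ternary ((2 ^ N) ^ d) fun m => b m j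
  refine ⟨a, fun j => ⟨ternary_nonneg _ _, (ternary_le (fun m => hb m j) _).trans_lt (by norm_num)⟩,
    ?_⟩
  set ω := modCont d f (Real.sqrt d)
  have hp₀ : 0 ≤ p := zero_le_one.trans hp
  have hω : 0 ≤ ω := modCont_nonneg hf (Real.sqrt_nonneg d)
  have hX : 0 ≤ |f 0| + ω := add_nonneg (abs_nonneg _) hω
  have hgood : ∀ x ∈ unitCube d, x ∉ {x | ∃ i, x i ∈ dyadicEdge N δ} →
      |phi ω (f 0) N δ a x - f x| ^ p
        ≤ (2 * ω * 2 ^ (-(N : ℤ)) + modCont d f (Real.sqrt d * 2 ^ (-(N : ℤ)))) ^ p :=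
    fun x hx hxB => Real.rpow_le_rpow (abs_nonneg _) (abs_phi_sub_le_of_notMem_dyadicEdge hf hδ.1
      hb hbf hx fun i hi => hxB ⟨i, hi⟩) hp₀
  have hbad : ∀ x ∈ unitCube d, |phi ω (f 0) N δ a x - f x| ^ p ≤ (2 * (|f 0| + ω)) ^ p :=
    fun x hx => Real.rpow_le_rpow (abs_nonneg _) (abs_phi_sub_le hf _ hx) hp₀
  have hvol := measureReal_unitCube_inter_dyadicEdge_le (d := d) (N := N) hδ.1.le hδ.2.le
  refine (setIntegral_le_of_le_off isCompact_unitCube.isClosed.measurableSet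
    (by simp [volume_unitCube]) (measurableSet_setOf_exists_apply_mem_dyadicEdge d N δ)
    (Real.rpow_nonneg (add_nonneg (by positivity) (modCont_nonneg hf (by positivity))) p)
    (fun x _ => by positivity) hgood hbad).trans ?_
  rw [measureReal_def, volume_unitCube, ENNReal.toReal_one, mul_one, Real.mul_rpow zero_le_two hX]
  linarith [mul_le_mul_of_nonneg_left hvol
    (mul_nonneg (Real.rpow_nonneg zero_le_two p) (Real.rpow_nonneg hX p))]

theorem stmt16 (d : ℕ) (hd : 0 < d) (f : EuclideanSpace ℝ (Fin d) → ℝ)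
    (hf : ContinuousOn f (unitCube d)) (δ : ℝ) (hδ : δ ∈ Set.Ioo (0:ℝ) 1)
    (N : ℕ) (hN : 0 < N) (p : ℝ) (hp : 1 ≤ p) :
    ∃ a : ℕ → ℝ, (∀ j, a j ∈ Set.Ico (0:ℝ) (2/9)) ∧
      (∫ x in unitCube d,
          |(2 * modCont d f (Real.sqrt d) *
              ∑ j ∈ Finset.Icc 1 N, (2:ℝ) ^ (-(j:ℤ)) *
                rho3 (a j * (3:ℝ) ^
                  ((1 + ∑ i : Fin d, (2:ℝ) ^ ((i:ℕ) * N) * rho1 δ ((2:ℝ) ^ N * x i) : ℝ)))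
            + f 0 - modCont d f (Real.sqrt d)) - f x| ^ p)
      ≤ (2 * modCont d f (Real.sqrt d) * (2:ℝ) ^ (-(N:ℤ))
            + modCont d f (Real.sqrt d * (2:ℝ) ^ (-(N:ℤ)))) ^ p
        + 2 ^ p * d * δ * (|f 0| + modCont d f (Real.sqrt d)) ^ p :=
  stmt16_general d f hf δ hδ N p hp
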